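/- For every k ∈ ℂ and every r′ ∈ ℝ³, the function u(r) = exp(i k ‖r − r′‖)/(4π ‖r − r′‖) satisfies the Helmholtz equation Δu(r) + k² u(r) = 0 at every point r ∈ ℝ³ with r ≠ r′, where Δ denotes the Euclidean Laplacian (the sum of the second partial derivatives in the three coordinates). -/

import Mathlib

/-!
Write `ρ = ‖x - r'‖`. For a radial function `u = f ρ` whose derivative is written as
`f' s = s φ(s)`, the chain rule along the `i`-th coordinate line gives
`∂ᵢu = (xᵢ - r'ᵢ) φ(ρ)` and `∂ᵢ²u = φ(ρ) + (xᵢ - r'ᵢ)² φ'(ρ) / ρ`; summing over the three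
coordinates, `Δu = 3 φ(ρ) + ρ φ'(ρ)`. For the Green profile `f s = e^{iks} / (4π s)` one has
`φ s = e^{iks} (iks - 1) / (4π s³)`, and `3 φ + s φ' = -k² f` is a one-variable identity.
-/

/-- Partial derivative in the `i`-th coordinate of a complex-valued function on `ℝ³`. -/
noncomputable def pderiv3 (i : Fin 3) (f : EuclideanSpace ℝ (Fin 3) → ℂ)
    (r : EuclideanSpace ℝ (Fin 3)) : ℂ :=
  deriv (fun t : ℝ => f (WithLp.toLp 2 (Function.update r i t))) (r i)

/-- The Euclidean Laplacian of a complex-valued function on `ℝ³`: the sum of the second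
partial derivatives in the three coordinates. -/
noncomputable def laplacian3 (f : EuclideanSpace ℝ (Fin 3) → ℂ)
    (r : EuclideanSpace ℝ (Fin 3)) : ℂ :=
  ∑ i : Fin 3, pderiv3 i (pderiv3 i f) r

/-- The free-space Helmholtz Green function with wavenumber `k`:
`G_k(r, r′) = exp(i k ‖r − r′‖)/(4π ‖r − r′‖)`. -/
noncomputable def green (k : ℂ) (r r' : EuclideanSpace ℝ (Fin 3)) : ℂ :=
  Complex.exp (Complex.I * k * (‖r - r'‖ : ℂ)) / (4 * (Real.pi : ℂ) * (‖r - r'‖ : ℂ))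

open Complex Filter Topology

theorem HasDerivAt.norm {F : Type*} [NormedAddCommGroup F] [InnerProductSpace ℝ F]
    {f : ℝ → F} {f' : F} {x : ℝ} (hf : HasDerivAt f f' x) (h0 : f x ≠ 0) :
    HasDerivAt (fun y => ‖f y‖) (Inner.inner ℝ (f x) f' / ‖f x‖) x := by
  have h := hf.norm_sq.sqrt (by positivity)
  simp only [Real.sqrt_sq (norm_nonneg _)] at h
  convert h using 1
  field_simp

section RadialFunction

variable {ι : Type*} [DecidableEq ι]

noncomputable def coordLine (r : EuclideanSpace ℝ ι) (i : ι) (t : ℝ) : EuclideanSpace ℝ ι :=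
  WithLp.toLp 2 (Function.update r i t)

@[simp]
theorem coordLine_apply_self (r : EuclideanSpace ℝ ι) (i : ι) (t : ℝ) :
    coordLine r i t i = t := by
  simp [coordLine]

@[simp]
theorem coordLine_self (r : EuclideanSpace ℝ ι) (i : ι) : coordLine r i (r i) = r := by
  simp [coordLine]

@[simp]
theorem coordLine_coordLine (r : EuclideanSpace ℝ ι) (i : ι) (t : ℝ) :
    coordLine (coordLine r i t) i = coordLine r i := by
  funext s
  simp [coordLine]

variable [Fintype ι]

theorem hasDerivAt_coordLine (r : EuclideanSpace ℝ ι) (i : ι) (t : ℝ) :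
    HasDerivAt (coordLine r i) (EuclideanSpace.single i 1) t :=
  (EuclideanSpace.equiv ι ℝ).symm.hasFDerivAt.comp_hasDerivAt t (hasDerivAt_update (⇑r) i t)

theorem hasDerivAt_norm_coordLine_sub (r r' : EuclideanSpace ℝ ι) (i : ι) {t : ℝ}
    (h : coordLine r i t ≠ r') :
    HasDerivAt (fun s => ‖coordLine r i s - r'‖) ((t - r' i) / ‖coordLine r i t - r'‖) t := by
  have h := HasDerivAt.norm ((hasDerivAt_coordLine r i t).sub_const r') (sub_ne_zero.2 h)
  simpa [EuclideanSpace.inner_single_right] using h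

variable {r r' : EuclideanSpace ℝ ι} {i : ι} {f φ : ℝ → ℂ} {φ' : ℂ}

theorem hasDerivAt_comp_norm_coordLine_sub {t : ℝ} (h : coordLine r i t ≠ r')
    (hf : HasDerivAt f (‖coordLine r i t - r'‖ • φ ‖coordLine r i t - r'‖)
      ‖coordLine r i t - r'‖) :
    HasDerivAt (fun s => f ‖coordLine r i s - r'‖) ((t - r' i) • φ ‖coordLine r i t - r'‖) t := by
  have hρ : ‖coordLine r i t - r'‖ ≠ 0 := norm_ne_zero_iff.2 (sub_ne_zero.2 h)
  refine (hf.scomp t (hasDerivAt_norm_coordLine_sub r r' i h)).congr_deriv ?_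
  rw [smul_smul, div_mul_cancel₀ _ hρ]

theorem hasDerivAt_smul_comp_norm_coordLine_sub {t : ℝ} (h : coordLine r i t ≠ r')
    (hφ : HasDerivAt φ φ' ‖coordLine r i t - r'‖) :
    HasDerivAt (fun s => (s - r' i) • φ ‖coordLine r i s - r'‖)
      (φ ‖coordLine r i t - r'‖ + ((t - r' i) ^ 2 / ‖coordLine r i t - r'‖) • φ') t := by
  refine ((hasDerivAt_id t).sub_const (r' i)).smul
    (hφ.scomp t (hasDerivAt_norm_coordLine_sub r r' i h)) |>.congr_deriv ?_
  simp only [Function.comp_apply, id, smul_smul, one_smul]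
  rw [add_comm]
  ring_nf

theorem deriv_deriv_comp_norm_coordLine_sub (hr : r ≠ r')
    (hf : ∀ᶠ s in 𝓝 ‖r - r'‖, HasDerivAt f (s • φ s) s) (hφ : HasDerivAt φ φ' ‖r - r'‖) :
    deriv (deriv fun t => f ‖coordLine r i t - r'‖) (r i)
      = φ ‖r - r'‖ + ((r i - r' i) ^ 2 / ‖r - r'‖) • φ' := by
  have hcont : ContinuousAt (coordLine r i) (r i) := (hasDerivAt_coordLine r i _).continuousAt
  have hne : ∀ᶠ t in 𝓝 (r i), coordLine r i t ≠ r' :=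
    hcont.eventually_ne (by rwa [coordLine_self])
  have hnorm : Tendsto (fun t => ‖coordLine r i t - r'‖) (𝓝 (r i)) (𝓝 ‖r - r'‖) := by
    simpa using (hcont.sub_const r').norm
  have hderiv : deriv (fun t => f ‖coordLine r i t - r'‖)
      =ᶠ[𝓝 (r i)] fun t => (t - r' i) • φ ‖coordLine r i t - r'‖ := by
    filter_upwards [hne, hnorm.eventually hf] with t ht hft
    exact (hasDerivAt_comp_norm_coordLine_sub ht hft).deriv
  have hsecond := hasDerivAt_smul_comp_norm_coordLine_sub (r := r) (r' := r') (i := i)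
    (t := r i) (φ := φ) (φ' := φ')
  rw [coordLine_self] at hsecond
  rw [hderiv.deriv_eq, (hsecond hr hφ).deriv]

end RadialFunction

theorem pderiv3_pderiv3 (i : Fin 3) (F : EuclideanSpace ℝ (Fin 3) → ℂ)
    (r : EuclideanSpace ℝ (Fin 3)) :
    pderiv3 i (pderiv3 i F) r = deriv (deriv (F ∘ coordLine r i)) (r i) := by
  show deriv (fun t => deriv (fun s => F (coordLine (coordLine r i t) i s)) (coordLine r i t i))
    (r i) = _
  simp only [coordLine_coordLine, coordLine_apply_self]
  rfl

theorem laplacian3_comp_norm_sub {f φ : ℝ → ℂ} {φ' : ℂ} {r r' : EuclideanSpace ℝ (Fin 3)}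
    (hr : r ≠ r') (hf : ∀ᶠ s in 𝓝 ‖r - r'‖, HasDerivAt f (s • φ s) s)
    (hφ : HasDerivAt φ φ' ‖r - r'‖) :
    laplacian3 (fun x => f ‖x - r'‖) r = 3 * φ ‖r - r'‖ + ‖r - r'‖ • φ' := by
  have hR : ‖r - r'‖ ≠ 0 := norm_ne_zero_iff.2 (sub_ne_zero.2 hr)
  have hsq : ∑ i, (r i - r' i) ^ 2 = ‖r - r'‖ ^ 2 := by
    simp [EuclideanSpace.real_norm_sq_eq]
  simp only [laplacian3, pderiv3_pderiv3, Function.comp_def,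
    deriv_deriv_comp_norm_coordLine_sub hr hf hφ, Finset.sum_add_distrib, ← Finset.sum_smul,
    ← Finset.sum_div, hsq, Finset.sum_const, Finset.card_univ, Fintype.card_fin, nsmul_eq_mul]
  rw [sq, mul_div_cancel_right₀ _ hR]
  norm_num

section GreenProfile

variable (k : ℂ) {s : ℝ}

noncomputable def greenProfile (s : ℝ) : ℂ := exp (I * k * s) / (4 * Real.pi * s)

noncomputable def greenSlope (s : ℝ) : ℂ :=
  exp (I * k * s) * (I * k * s - 1) / (4 * Real.pi * s ^ 3)

theorem hasDerivAt_greenProfile (hs : s ≠ 0) :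
    HasDerivAt (greenProfile k) (s • greenSlope k s) s := by
  have hs' : (s : ℂ) ≠ 0 := ofReal_ne_zero.2 hs
  have hπ : (Real.pi : ℂ) ≠ 0 := ofReal_ne_zero.2 Real.pi_ne_zero
  have h := (((hasDerivAt_id (s : ℂ)).const_mul (I * k)).cexp.div
    ((hasDerivAt_id (s : ℂ)).const_mul (4 * Real.pi : ℂ)) (by simp [hs', hπ])).comp_ofReal
  convert h using 1
  · ext y
    simp [greenProfile]
  · simp only [greenSlope, id, mul_one, real_smul]
    field_simp

theorem hasDerivAt_greenSlope (hs : s ≠ 0) :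
    HasDerivAt (greenSlope k)
      (exp (I * k * s) * (-(k ^ 2 * s ^ 2) - 3 * (I * k * s - 1)) / (4 * Real.pi * s ^ 4)) s := by
  have hs' : (s : ℂ) ≠ 0 := ofReal_ne_zero.2 hs
  have hπ : (Real.pi : ℂ) ≠ 0 := ofReal_ne_zero.2 Real.pi_ne_zero
  have h := ((((hasDerivAt_id (s : ℂ)).const_mul (I * k)).cexp.mul
    (((hasDerivAt_id (s : ℂ)).const_mul (I * k)).sub_const 1)).div
    ((hasDerivAt_pow 3 (s : ℂ)).const_mul (4 * Real.pi : ℂ)) (by simp [hs', hπ])).comp_ofReal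
  convert h using 1
  · ext y
    simp [greenSlope]
  · simp only [id, mul_one, Pi.mul_apply]
    field_simp
    ring_nf
    simp only [I_sq]
    ring

theorem greenProfile_radial_helmholtz (hs : s ≠ 0) :
    3 * greenSlope k s + s • deriv (greenSlope k) s + k ^ 2 * greenProfile k s = 0 := by
  have hs' : (s : ℂ) ≠ 0 := ofReal_ne_zero.2 hs
  simp only [(hasDerivAt_greenSlope k hs).deriv, greenSlope, greenProfile, real_smul]
  field_simp
  ring

end GreenProfile

/-- For every `k ∈ ℂ` and every `r′ ∈ ℝ³`, the function
`u(r) = exp(i k ‖r − r′‖)/(4π ‖r − r′‖)` satisfies the Helmholtz equation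
`Δu(r) + k² u(r) = 0` at every point `r ∈ ℝ³` with `r ≠ r′`. -/
theorem stmt_4 (k : ℂ) (r' : EuclideanSpace ℝ (Fin 3)) :
    ∀ r : EuclideanSpace ℝ (Fin 3), r ≠ r' →
      laplacian3 (fun x => green k x r') r + k ^ 2 * green k r r' = 0 := by
  intro r hr
  have hR : ‖r - r'‖ ≠ 0 := norm_ne_zero_iff.2 (sub_ne_zero.2 hr)
  have hprofile : ∀ᶠ s in 𝓝 ‖r - r'‖, HasDerivAt (greenProfile k) (s • greenSlope k s) s :=
    (eventually_ne_nhds hR).mono fun s hs => hasDerivAt_greenProfile k hs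
  have hslope := (hasDerivAt_greenSlope k hR).differentiableAt.hasDerivAt
  change laplacian3 (fun x => greenProfile k ‖x - r'‖) r + k ^ 2 * greenProfile k ‖r - r'‖ = 0
  rw [laplacian3_comp_norm_sub hr hprofile hslope]
  exact greenProfile_radial_helmholtz k hR
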